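/- Let p be a prime, let k be a commutative ring of characteristic p, and let M be a module over the polynomial ring k[X]. Let D : k[X] → k[X] be the map D(f) = X · f′ (with f′ the formal derivative). Suppose ∇ : M → M is an additive map satisfying the Leibniz rule ∇(f • m) = D(f) • m + f • ∇(m) for all f ∈ k[X] and m ∈ M. Then the map ψ := ∇^[p] − ∇ (the p-fold iterate of ∇ minus ∇) is k[X]-linear; that is, ψ is additive and ψ(f • m) = f • ψ(m) for all f ∈ k[X], m ∈ M. -/
import Mathlib

open Polynomial

private lemma pCurv_aux_neg_one_pow {R : Type*} [Ring R] (p : ℕ) (hp : p.Prime)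
    (h : p • (1 : R) = 0) : (-1 : R) ^ p = -1 := by
  rcases hp.eq_two_or_odd' with h2 | hodd
  · subst h2
    have h0 : (1 : R) + 1 = 0 := by simpa [two_smul] using h
    have h1 : (1 : R) = -1 := by rw [eq_neg_iff_add_eq_zero]; exact h0
    rw [neg_one_sq]; exact h1
  · exact hodd.neg_one_pow

/-- Let `p` be a prime, `k` a commutative ring of characteristic `p`, and `M` a
module over `k[X]`. Let `D f = X * f'`. If `nab : M → M` is additive and satisfies
the Leibniz rule `nab (f • m) = D f • m + f • nab m`, then `ψ := nab^[p] - nab` is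
`k[X]`-linear: additive and commuting with scalar multiplication. -/
theorem pCurvature_linear (p : ℕ) (hp : p.Prime)
    (k : Type*) [CommRing k] [CharP k p]
    (M : Type*) [AddCommGroup M] [Module (Polynomial k) M]
    (nab : M → M)
    (hadd : ∀ m m' : M, nab (m + m') = nab m + nab m')
    (hleib : ∀ (f : Polynomial k) (m : M),
      nab (f • m) = (Polynomial.X * Polynomial.derivative f) • m + f • nab m) :
    (∀ m m' : M,
        (nab^[p] (m + m') - nab (m + m')) = (nab^[p] m - nab m) + (nab^[p] m' - nab m')) ∧
    (∀ (f : Polynomial k) (m : M),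
        nab^[p] (f • m) - nab (f • m) = f • (nab^[p] m - nab m)) := by
  haveI := Fact.mk hp
  have hitadd : ∀ (n : ℕ) (m m' : M), nab^[n] (m + m') = nab^[n] m + nab^[n] m' := by
    intro n
    induction n with
    | zero => intro m m'; simp
    | succ n ih =>
      intro m m'
      rw [Function.iterate_succ_apply, Function.iterate_succ_apply,
        Function.iterate_succ_apply, hadd, ih]
  refine ⟨fun m m' => by rw [hitadd, hadd]; abel, ?_⟩
  -- torsion facts
  have hpP : ∀ g : Polynomial k, p • g = 0 := by
    intro g
    have h0 : ((p : Polynomial k)) = 0 := by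
      rw [← map_natCast (C : k →+* Polynomial k) p, CharP.cast_eq_zero k p, map_zero]
    rw [nsmul_eq_mul, h0, zero_mul]
  have hpM : ∀ x : M, p • x = 0 := by
    intro x
    rw [← Nat.cast_smul_eq_nsmul (Polynomial k), CharP.cast_eq_zero, zero_smul]
  -- the derivation D f = X f'
  set D : Polynomial k → Polynomial k := fun f => X * derivative f with hD
  have hDadd : ∀ a b, D (a + b) = D a + D b := by intro a b; simp [hD, mul_add]
  have hDsmul : ∀ (n : ℕ) (a), D (n • a) = n • D a := by
    intro n a; simp [hD]; ring
  have hDmono : ∀ (n : ℕ) (c : k), D (monomial n c) = n • monomial n c := by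
    intro n c
    cases n with
    | zero => simp [hD]
    | succ n =>
      simp [hD, derivative_monomial, X_mul_monomial, smul_monomial]
      rw [mul_comm]
  -- Fermat's little theorem
  have hferm : ∀ n : ℕ, p ∣ n ^ p - n := by
    intro n
    have h : ((n : ZMod p)) ^ p = n := ZMod.pow_card _
    have h2 : ((n ^ p : ℕ) : ZMod p) = ((n : ℕ) : ZMod p) := by push_cast; exact h
    have hmod : n ^ p ≡ n [MOD p] := (ZMod.natCast_eq_natCast_iff _ _ _).mp h2
    exact (Nat.modEq_iff_dvd' (Nat.le_self_pow hp.ne_zero n)).mp hmod.symm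
  -- D^[p] = D
  have hDit : ∀ f, D^[p] f = D f := by
    have hitD : ∀ (j : ℕ), ∀ a b, D^[j] (a + b) = D^[j] a + D^[j] b := by
      intro j
      induction j with
      | zero => intro a b; simp
      | succ j ih =>
        intro a b
        rw [Function.iterate_succ_apply, Function.iterate_succ_apply,
          Function.iterate_succ_apply, hDadd, ih]
    have hmono : ∀ (j n : ℕ) (c : k), D^[j] (monomial n c) = n ^ j • monomial n c := by
      intro j n c
      induction j with
      | zero => simp
      | succ j ih =>
        rw [Function.iterate_succ_apply', ih, hDsmul, hDmono, smul_smul, pow_succ]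
    intro f
    induction f using Polynomial.induction_on' with
    | add a b ha hb => rw [hitD, ha, hb, hDadd]
    | monomial n c =>
      rw [hmono, hDmono]
      obtain ⟨t, ht⟩ := hferm n
      have hnp : n ^ p = n + p * t := by
        have := Nat.le_self_pow hp.ne_zero n
        omega
      rw [hnp, add_smul, mul_smul, hpP, add_zero]
  -- operator setup
  set N : AddMonoid.End M := AddMonoidHom.mk' nab hadd with hN
  set L : Polynomial k →+* AddMonoid.End M := Module.toAddMonoidEnd (Polynomial k) M with hL
  have hNpow : ∀ (n : ℕ) (x : M), (N ^ n) x = nab^[n] x := by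
    intro n
    induction n with
    | zero => intro x; rfl
    | succ n ih =>
      intro x
      rw [pow_succ, Function.iterate_succ_apply]
      exact ih (nab x)
  have comm : ∀ g : Polynomial k, N * L g = L (D g) + L g * N := by
    intro g
    apply AddMonoidHom.ext
    intro x
    show nab (g • x) = D g • x + g • nab x
    exact hleib g x
  have commL : ∀ g : Polynomial k, L (D g) = N * L g - L g * N := by
    intro g
    rw [comm g]; abel
  -- torsion in endomorphism rings
  have hpB : ∀ φ : AddMonoid.End M, p • φ = 0 := by
    intro φ
    apply AddMonoidHom.ext
    intro x
    show p • φ x = 0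
    exact hpM (φ x)
  have hpC : ∀ ψ : AddMonoid.End (AddMonoid.End M), p • ψ = 0 := by
    intro ψ
    apply AddMonoidHom.ext
    intro x
    show p • ψ x = 0
    exact hpB (ψ x)
  set u : AddMonoid.End (AddMonoid.End M) := AddMonoidHom.mulLeft N with hu
  set v : AddMonoid.End (AddMonoid.End M) := AddMonoidHom.mulRight N with hv
  have huapp : ∀ x : AddMonoid.End M, u x = N * x := fun x => rfl
  have hvapp : ∀ x : AddMonoid.End M, v x = x * N := fun x => rfl
  have hupow : ∀ (n : ℕ) (x : AddMonoid.End M), (u ^ n) x = N ^ n * x := by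
    intro n
    induction n with
    | zero => intro x; rw [pow_zero, pow_zero, one_mul]; rfl
    | succ n ih =>
      intro x
      rw [pow_succ]
      show (u ^ n) (u x) = N ^ (n + 1) * x
      rw [ih, huapp, ← mul_assoc, ← pow_succ]
  have hvpow : ∀ (n : ℕ) (x : AddMonoid.End M), (v ^ n) x = x * N ^ n := by
    intro n
    induction n with
    | zero => intro x; rw [pow_zero, pow_zero, mul_one]; rfl
    | succ n ih =>
      intro x
      rw [pow_succ]
      show (v ^ n) (v x) = x * N ^ (n + 1)
      rw [ih, hvapp, mul_assoc, ← pow_succ']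
  -- iterated commutator
  have hcit : ∀ (n : ℕ) (g : Polynomial k), ((u - v) ^ n) (L g) = L (D^[n] g) := by
    intro n
    induction n with
    | zero => intro g; rfl
    | succ n ih =>
      intro g
      rw [pow_succ, Function.iterate_succ_apply]
      show ((u - v) ^ n) ((u - v) (L g)) = L (D^[n] (D g))
      have h1 : (u - v) (L g) = L (D g) := by
        show u (L g) - v (L g) = L (D g)
        rw [huapp, hvapp, commL]
      rw [h1, ih]
  -- casts of multiples of p vanish
  have hcast : ∀ m : ℕ, p ∣ m → (m : AddMonoid.End (AddMonoid.End M)) = 0 := by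
    intro m hm
    obtain ⟨t, rfl⟩ := hm
    have hpz : ((p : ℕ) : AddMonoid.End (AddMonoid.End M)) = 0 := by
      rw [show ((p : ℕ) : AddMonoid.End (AddMonoid.End M)) = p • 1 by rw [nsmul_eq_mul, mul_one]]
      exact hpC 1
    rw [Nat.cast_mul, hpz, zero_mul]
  -- binomial expansion of (u - v)^p
  have hcomm0 : Commute u v := by
    apply AddMonoidHom.ext
    intro x
    show N * (x * N) = N * x * N
    rw [mul_assoc]
  have hcomm : Commute u (-v) := hcomm0.neg_right
  have hexp : (u - v) ^ p = u ^ p - v ^ p := by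
    obtain ⟨q, hq⟩ : ∃ q, p = q + 1 := ⟨p - 1, by have := hp.one_lt; omega⟩
    rw [sub_eq_add_neg, hcomm.add_pow, hq]
    rw [Finset.sum_range_succ, Finset.sum_range_succ']
    have hmid : ∀ i ∈ Finset.range q,
        u ^ (i + 1) * (-v) ^ (q + 1 - (i + 1)) *
          (((q + 1).choose (i + 1) : ℕ) : AddMonoid.End (AddMonoid.End M)) = 0 := by
      intro i hi
      rw [Finset.mem_range] at hi
      have hp' : (q + 1).Prime := hq ▸ hp
      have hdvd : (q + 1) ∣ (q + 1).choose (i + 1) :=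
        hp'.dvd_choose_self (by omega) (by omega)
      rw [hcast _ (hq ▸ hdvd), mul_zero]
    rw [Finset.sum_eq_zero hmid, zero_add]
    simp only [pow_zero, one_mul, mul_one, Nat.choose_self, Nat.choose_zero_right,
      Nat.cast_one, Nat.sub_zero, tsub_self]
    have hneg : (-v) ^ (q + 1) = -(v ^ (q + 1)) := by
      rw [show -v = (-1 : AddMonoid.End (AddMonoid.End M)) * v from (neg_one_mul v).symm,
        (Commute.neg_one_left v).mul_pow, pCurv_aux_neg_one_pow (q + 1) (hq ▸ hp)
        (by rw [← hq]; simpa using hpC 1)]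
      exact neg_one_mul (v ^ (q + 1))
    rw [hneg]
    abel
  -- the key operator identity
  intro f m
  have h1 : L (D f) = N ^ p * L f - L f * N ^ p := by
    have := hcit p f
    rw [hDit, hexp] at this
    rw [← this]
    show (u ^ p) (L f) - (v ^ p) (L f) = _
    rw [hupow, hvpow]
  have h12 : N ^ p * L f - L f * N ^ p = N * L f - L f * N := by
    rw [← h1, commL]
  have key : N ^ p * L f - N * L f = L f * N ^ p - L f * N :=
    sub_eq_sub_iff_sub_eq_sub.mp h12
  have lhs : (N ^ p * L f - N * L f) m = nab^[p] (f • m) - nab (f • m) := by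
    show (N ^ p) (f • m) - nab (f • m) = _
    rw [hNpow]
  have rhs : (L f * N ^ p - L f * N) m = f • nab^[p] m - f • nab m := by
    show f • ((N ^ p) m) - f • nab m = _
    rw [hNpow]
  rw [smul_sub, ← lhs, ← rhs, key]
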